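/- arXiv:1206.3563 — 2 statements merged into one kernel-verified Lean document; each statement's English description precedes it below -/
import Mathlib

section
/- Let V be a real inner product space with a compatible complex structure J, W ⊂ V a subspace, P the orthogonal projection onto W, and φ = P∘J restricted to W. If for every nonzero X ∈ W the angle θ(X) between JX and W equals a fixed constant θ, then φ²X = −cos²θ · X for all X ∈ W. -/
open scoped RealInnerProductSpace

/-! The compression `A = P ∘ J` of `J` to `W` is skew-adjoint on `W`, because `J` is. The constant
angle says `‖A x‖ = cos θ ‖x‖`, so by polarization `⟪A x, A y⟫ = cos² θ ⟪x, y⟫`, i.e.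
`⟪A (A x), y⟫ = -⟪A x, A y⟫ = -cos² θ ⟪x, y⟫` for all `y ∈ W`. -/

theorem Real.cos_arccos_div_of_le {a b : ℝ} (ha : 0 ≤ a) (hab : a ≤ b) :
    Real.cos (Real.arccos (a / b)) = a / b :=
  Real.cos_arccos (by linarith [div_nonneg ha (ha.trans hab)]) (div_le_one_of_le₀ hab (ha.trans hab))

section InnerProductSpace

variable {E : Type*} [NormedAddCommGroup E] [InnerProductSpace ℝ E]

theorem inner_map_map_of_norm_map_eq_mul_norm (A : E →ₗ[ℝ] E) (c : ℝ)
    (hA : ∀ x, ‖A x‖ = c * ‖x‖) (x y : E) : ⟪A x, A y⟫ = c ^ 2 * ⟪x, y⟫ := by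
  rw [real_inner_eq_norm_add_mul_self_sub_norm_mul_self_sub_norm_mul_self_div_two,
    real_inner_eq_norm_add_mul_self_sub_norm_mul_self_sub_norm_mul_self_div_two x y,
    ← map_add, hA, hA, hA]
  ring

theorem map_map_eq_neg_sq_smul_of_skew (A : E →ₗ[ℝ] E) (c : ℝ)
    (hskew : ∀ x y, ⟪A x, y⟫ = -⟪x, A y⟫) (hA : ∀ x, ‖A x‖ = c * ‖x‖) (x : E) :
    A (A x) = -c ^ 2 • x :=
  ext_inner_right ℝ fun y => by
    rw [hskew, inner_map_map_of_norm_map_eq_mul_norm A c hA, real_inner_smul_left, neg_mul]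

theorem inner_map_left_eq_neg_of_map_map_eq_neg (J : E →ₗ[ℝ] E) (hJ2 : ∀ x, J (J x) = -x)
    (hJiso : ∀ x y, ⟪J x, J y⟫ = ⟪x, y⟫) (x y : E) : ⟪J x, y⟫ = -⟪x, J y⟫ := by
  rw [← hJiso x (J y), hJ2, inner_neg_right, neg_neg]

end InnerProductSpace

namespace Submodule

variable {E : Type*} [NormedAddCommGroup E] [InnerProductSpace ℝ E]
  (W : Submodule ℝ E) [W.HasOrthogonalProjection]

noncomputable def compression (J : E →ₗ[ℝ] E) : W →ₗ[ℝ] W :=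
  W.orthogonalProjectionOnto.toLinearMap ∘ₗ J ∘ₗ W.subtype

@[simp]
theorem compression_apply (J : E →ₗ[ℝ] E) (x : W) :
    W.compression J x = W.orthogonalProjectionOnto (J x) :=
  rfl

theorem inner_compression_left_eq_neg {J : E →ₗ[ℝ] E} (hJ : ∀ x y, ⟪J x, y⟫ = -⟪x, J y⟫)
    (x y : W) : ⟪W.compression J x, y⟫ = -⟪x, W.compression J y⟫ := by
  rw [compression_apply, compression_apply, inner_orthogonalProjectionOnto_eq_of_mem_right,
    inner_orthogonalProjectionOnto_eq_of_mem_left, hJ]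

end Submodule

/-- if the angle between `J x` and `W` is a constant `θ` for every nonzero
`x ∈ W`, then `φ² = −cos²θ · Id` on `W`, where `φ = P ∘ J` and `P` is the orthogonal
projection onto `W`. -/
theorem phi_sq_eq_neg_cos_sq_of_constant_angle
    {V : Type*} [NormedAddCommGroup V] [InnerProductSpace ℝ V] [FiniteDimensional ℝ V]
    (J : V →ₗ[ℝ] V)
    (hJ2 : ∀ x : V, J (J x) = -x)
    (hJiso : ∀ x y : V, ⟪J x, J y⟫ = ⟪x, y⟫)
    (W : Submodule ℝ V)
    (φ : V → V)
    (hφ : ∀ x : V, φ x = ((W.orthogonalProjection (J x) : W) : V))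
    (θ : ℝ)
    (hangle : ∀ x ∈ W, x ≠ 0 →
      Real.arccos (‖((W.orthogonalProjection (J x) : W) : V)‖ / ‖J x‖) = θ) :
    ∀ x ∈ W, φ (φ x) = -(Real.cos θ) ^ 2 • x := by
  intro x hx
  have hJnorm (v : V) : ‖J v‖ = ‖v‖ := (J.isometryOfInner hJiso).norm_map v
  have hnorm (y : W) : ‖W.compression J y‖ = Real.cos θ * ‖y‖ := by
    rcases eq_or_ne y 0 with rfl | hy0
    · simp
    have hy : (y : V) ≠ 0 := by exact_mod_cast hy0
    have hle : ‖((W.orthogonalProjectionOnto (J y) : W) : V)‖ ≤ ‖J y‖ :=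
      W.norm_orthogonalProjectionOnto_apply_le (J y)
    rw [← hangle y y.2 hy, Real.cos_arccos_div_of_le (norm_nonneg _) hle, hJnorm]
    exact (div_mul_cancel₀ _ (norm_ne_zero_iff.mpr hy)).symm
  have hskew :=
    W.inner_compression_left_eq_neg (inner_map_left_eq_neg_of_map_map_eq_neg J hJ2 hJiso)
  have hsq := map_map_eq_neg_sq_smul_of_skew _ _ hskew hnorm ⟨x, hx⟩
  simpa [hφ] using congrArg Subtype.val hsq
end

section
/- Let F be a Riemannian map between Riemannian manifolds with dim(ker F_*) = m₁ and rank F = m₂. Then the tension field of F satisfies τ(F) = −m₁·F_*(H) + m₂·H₂, where H is the mean curvature vector field of the distribution ker F_* and H₂ is the mean curvature vector field of range F_* (with respect to the second fundamental form of F). -/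
/-!
On vertical fields `F_*` vanishes, so `(∇F_*)(U,U) = -F_*(∇_U U)`; since `F_*` only sees the
horizontal part (`hP` models the horizontal projection `ℋ`), this is `-F_*(ℋ ∇_U U) =
-F_*(𝒯_U U)`, and summing over the vertical frame gives `-m₁ F_*(H)`.
-/

section SecondFundamentalForm

variable {VF₁ VF₂ : Type*} [AddCommGroup VF₁] [Module ℝ VF₁] [AddCommGroup VF₂] [Module ℝ VF₂]
  (Fstar : VF₁ →ₗ[ℝ] VF₂) (nab1 : VF₁ → VF₁ → VF₁) (nabF : VF₁ → VF₂ → VF₂)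

def secondFundamentalForm (X Y : VF₁) : VF₂ :=
  nabF X (Fstar Y) - Fstar (nab1 X Y)

variable {Fstar nab1 nabF}

theorem secondFundamentalForm_of_map_eq_zero (hnabF0 : ∀ x : VF₁, nabF x (0 : VF₂) = 0)
    (X : VF₁) {V : VF₁} (hV : Fstar V = 0) :
    secondFundamentalForm Fstar nab1 nabF X V = -Fstar (nab1 X V) := by
  rw [secondFundamentalForm, hV, hnabF0, zero_sub]

theorem sum_secondFundamentalForm_vertical (hP : VF₁ →ₗ[ℝ] VF₁)
    (hPF : ∀ w, Fstar (hP w) = Fstar w) (hnabF0 : ∀ x : VF₁, nabF x (0 : VF₂) = 0)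
    {ι : Type*} (s : Finset ι) (U : ι → VF₁) (hU : ∀ i, Fstar (U i) = 0) :
    ∑ i ∈ s, secondFundamentalForm Fstar nab1 nabF (U i) (U i)
      = -Fstar (∑ i ∈ s, hP (nab1 (U i) (U i))) := by
  simp only [secondFundamentalForm_of_map_eq_zero hnabF0 _ (hU _), map_sum, hPF,
    Finset.sum_neg_distrib]

end SecondFundamentalForm

theorem tension_field_riemannian_map_general
    {VF₁ VF₂ : Type*} [AddCommGroup VF₁] [Module ℝ VF₁] [AddCommGroup VF₂] [Module ℝ VF₂]
    (Fstar : VF₁ →ₗ[ℝ] VF₂)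
    (nab1 : VF₁ → VF₁ → VF₁) (nabF : VF₁ → VF₂ → VF₂)
    (Vert : Submodule ℝ VF₁)
    (hP : VF₁ →ₗ[ℝ] VF₁)
    (hPF : ∀ w, Fstar (hP w) = Fstar w)
    (hker : ∀ v ∈ Vert, Fstar v = 0)
    (hnabF0 : ∀ x : VF₁, nabF x (0 : VF₂) = 0)
    (m₁ m₂ : ℕ) (U : Fin m₁ → VF₁) (Xs : Fin m₂ → VF₁)
    (hU : ∀ i, U i ∈ Vert)
    (Hmean : VF₁) (H₂ : VF₂)
    (hH : (m₁ : ℝ) • Hmean = ∑ i, hP (nab1 (U i) (U i)))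
    (hH₂ : (m₂ : ℝ) • H₂ = ∑ j, (nabF (Xs j) (Fstar (Xs j)) - Fstar (nab1 (Xs j) (Xs j)))) :
    (∑ i, (nabF (U i) (Fstar (U i)) - Fstar (nab1 (U i) (U i))))
      + (∑ j, (nabF (Xs j) (Fstar (Xs j)) - Fstar (nab1 (Xs j) (Xs j))))
      = -((m₁ : ℝ) • Fstar Hmean) + (m₂ : ℝ) • H₂ := by
  have hvert := sum_secondFundamentalForm_vertical (nab1 := nab1) hP hPF hnabF0
    Finset.univ U fun i => hker _ (hU i)
  simp only [secondFundamentalForm] at hvert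
  rw [hvert, ← hH, map_smul, hH₂]

/-- Lemma 2.2: for a Riemannian map `F` with `dim(ker F_*) = m₁` and
`rank F = m₂`, the tension field (the trace of the second fundamental form, computed with
an orthonormal frame `{Uᵢ}` of `ker F_*` and `{Xⱼ}` of `(ker F_*)^⊥`) satisfies
`τ(F) = −m₁ F_*(H) + m₂ H₂`, where `m₁ H = Σᵢ 𝒯_{Uᵢ}Uᵢ = Σᵢ ℋ(∇_{Uᵢ}Uᵢ)` is the mean
curvature of `ker F_*` and `m₂ H₂ = Σⱼ (∇F_*)(Xⱼ,Xⱼ)` the mean curvature of `range F_*`.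

Modelled algebraically: `hP` is the horizontal projection (so `Fstar ∘ hP = Fstar`
since `Fstar` kills vertical fields), `nab1`, `nabF` are the Levi-Civita and pullback
connections, and `(∇F_*)(X,Y) = nabF X (Fstar Y) − Fstar (nab1 X Y)`. -/
theorem tension_field_riemannian_map
    {VF₁ VF₂ : Type*} [AddCommGroup VF₁] [Module ℝ VF₁] [AddCommGroup VF₂] [Module ℝ VF₂]
    (Fstar : VF₁ →ₗ[ℝ] VF₂)
    (nab1 : VF₁ → VF₁ → VF₁) (nabF : VF₁ → VF₂ → VF₂)
    (Vert Hor : Submodule ℝ VF₁)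
    (hP : VF₁ →ₗ[ℝ] VF₁)
    (hPrange : ∀ w, hP w ∈ Hor)
    (hPF : ∀ w, Fstar (hP w) = Fstar w)
    (hker : ∀ v ∈ Vert, Fstar v = 0)
    (hnabF0 : ∀ x : VF₁, nabF x (0 : VF₂) = 0)
    (m₁ m₂ : ℕ) (U : Fin m₁ → VF₁) (Xs : Fin m₂ → VF₁)
    (hU : ∀ i, U i ∈ Vert) (hX : ∀ j, Xs j ∈ Hor)
    (Hmean : VF₁) (H₂ : VF₂)
    (hH : (m₁ : ℝ) • Hmean = ∑ i, hP (nab1 (U i) (U i)))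
    (hH₂ : (m₂ : ℝ) • H₂ = ∑ j, (nabF (Xs j) (Fstar (Xs j)) - Fstar (nab1 (Xs j) (Xs j)))) :
    (∑ i, (nabF (U i) (Fstar (U i)) - Fstar (nab1 (U i) (U i))))
      + (∑ j, (nabF (Xs j) (Fstar (Xs j)) - Fstar (nab1 (Xs j) (Xs j))))
      = -((m₁ : ℝ) • Fstar Hmean) + (m₂ : ℝ) • H₂ :=
  tension_field_riemannian_map_general Fstar nab1 nabF Vert hP hPF hker hnabF0 m₁ m₂ U Xs hU Hmean
    H₂ hH hH₂
end
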